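/- arXiv:2012.06751 — 2 statements merged into one kernel-verified Lean document; each statement's English description precedes it below -/
import Mathlib

section
/- A map ρ: L^∞(P) → ℝ is a positively homogeneous monetary risk measure if and only if ρ(X) = inf{h(X) : h is a coherent risk measure on L^∞(P) with h ≥ ρ pointwise} for every X ∈ L^∞(P). -/
open MeasureTheory ProbabilityTheory Filter Set

/-- `X` belongs to `L^∞(P)`: measurable and essentially bounded. -/
def MemLinf {Ω : Type*} [MeasurableSpace Ω] (P : Measure Ω) (X : Ω → ℝ) : Prop :=
  Measurable X ∧ ∃ C : ℝ, ∀ᵐ ω ∂P, |X ω| ≤ C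

/-- `h` is a monetary risk measure on `L^∞(P)`: monotone and translation-invariant. -/
def IsMonetaryRM {Ω : Type*} [MeasurableSpace Ω] (P : Measure Ω)
    (h : (Ω → ℝ) → ℝ) : Prop :=
  (∀ X Y : Ω → ℝ, MemLinf P X → MemLinf P Y → (∀ᵐ ω ∂P, X ω ≤ Y ω) → h Y ≤ h X) ∧
  (∀ X : Ω → ℝ, MemLinf P X → ∀ m : ℝ, h (fun ω => X ω + m) = h X - m)

/-- `h` is positively homogeneous on `L^∞(P)`. -/
def IsPosHom {Ω : Type*} [MeasurableSpace Ω] (P : Measure Ω)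
    (h : (Ω → ℝ) → ℝ) : Prop :=
  ∀ X : Ω → ℝ, MemLinf P X → ∀ α : ℝ, 0 ≤ α → h (fun ω => α * X ω) = α * h X

/-- `h` is a coherent risk measure on `L^∞(P)`: a monetary risk measure that is convex and
positively homogeneous. -/
def IsCoherentRM {Ω : Type*} [MeasurableSpace Ω] (P : Measure Ω)
    (h : (Ω → ℝ) → ℝ) : Prop :=
  IsMonetaryRM P h ∧
  (∀ X Y : Ω → ℝ, MemLinf P X → MemLinf P Y → ∀ α : ℝ, 0 ≤ α → α ≤ 1 →
    h (fun ω => α * X ω + (1 - α) * Y ω) ≤ α * h X + (1 - α) * h Y) ∧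
  IsPosHom P h

section Aux

variable {Ω : Type*} [MeasurableSpace Ω] {P : Measure Ω}

lemma memLinf_add_const {X : Ω → ℝ} (hX : MemLinf P X) (c : ℝ) :
    MemLinf P fun ω => X ω + c := by
  obtain ⟨hm, C, hC⟩ := hX
  refine ⟨hm.add_const c, C + |c|, ?_⟩
  filter_upwards [hC] with ω h
  calc |X ω + c| ≤ |X ω| + |c| := abs_add_le _ _
    _ ≤ C + |c| := by linarith

lemma memLinf_const_mul {X : Ω → ℝ} (hX : MemLinf P X) (c : ℝ) :
    MemLinf P fun ω => c * X ω := by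
  obtain ⟨hm, C, hC⟩ := hX
  refine ⟨hm.const_mul c, |c| * C, ?_⟩
  filter_upwards [hC] with ω h
  rw [abs_mul]
  exact mul_le_mul_of_nonneg_left h (abs_nonneg c)

lemma memLinf_add {X Y : Ω → ℝ} (hX : MemLinf P X) (hY : MemLinf P Y) :
    MemLinf P fun ω => X ω + Y ω := by
  obtain ⟨hm, C, hC⟩ := hX
  obtain ⟨hm', C', hC'⟩ := hY
  refine ⟨hm.add hm', C + C', ?_⟩
  filter_upwards [hC, hC'] with ω h h'
  calc |X ω + Y ω| ≤ |X ω| + |Y ω| := abs_add_le _ _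
    _ ≤ C + C' := by linarith

lemma memLinf_zero : MemLinf P fun _ : Ω => (0 : ℝ) :=
  ⟨measurable_const, 0, ae_of_all _ fun ω => by simp⟩

def SS (P : Measure Ω) (W Y : Ω → ℝ) : Set ℝ :=
  {m : ℝ | ∃ l : ℝ, 0 ≤ l ∧ ∀ᵐ ω ∂P, l * W ω ≤ Y ω + m}

lemma SS_nonempty (W : Ω → ℝ) {Y : Ω → ℝ} (hY : MemLinf P Y) : (SS P W Y).Nonempty := by
  obtain ⟨-, C, hC⟩ := hY
  refine ⟨C, 0, le_refl _, ?_⟩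
  filter_upwards [hC] with ω h
  have := abs_le.mp h
  linarith [this.1]

lemma SS_lb {ρ : (Ω → ℝ) → ℝ} (hρ : IsMonetaryRM P ρ) (hph : IsPosHom P ρ)
    {W Y : Ω → ℝ} (hW : MemLinf P W) (hW0 : ρ W = 0) (hY : MemLinf P Y) :
    ρ Y ∈ lowerBounds (SS P W Y) := by
  rintro m ⟨l, hl, hae⟩
  have h1 : ρ (fun ω => Y ω + m) ≤ ρ (fun ω => l * W ω) :=
    hρ.1 _ _ (memLinf_const_mul hW l) (memLinf_add_const hY m) hae
  rw [hρ.2 Y hY m, hph W hW l hl, hW0] at h1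
  linarith

lemma SS_bddBelow {ρ : (Ω → ℝ) → ℝ} (hρ : IsMonetaryRM P ρ) (hph : IsPosHom P ρ)
    {W Y : Ω → ℝ} (hW : MemLinf P W) (hW0 : ρ W = 0) (hY : MemLinf P Y) :
    BddBelow (SS P W Y) := ⟨ρ Y, SS_lb hρ hph hW hW0 hY⟩

lemma exists_coherent {ρ : (Ω → ℝ) → ℝ} (hρ : IsMonetaryRM P ρ) (hph : IsPosHom P ρ)
    {X : Ω → ℝ} (hX : MemLinf P X) :
    ∃ h : (Ω → ℝ) → ℝ, IsCoherentRM P h ∧ (∀ Y : Ω → ℝ, MemLinf P Y → ρ Y ≤ h Y) ∧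
      h X = ρ X := by
  have hW : MemLinf P (fun ω => X ω + ρ X) := memLinf_add_const hX (ρ X)
  set W : Ω → ℝ := fun ω => X ω + ρ X with hWdef
  have hW0 : ρ W = 0 := by rw [hWdef, hρ.2 X hX (ρ X)]; ring
  refine ⟨fun Y => sInf (SS P W Y), ?_, ?_, ?_⟩
  rotate_left
  · -- domination
    exact fun Y hY => le_csInf (SS_nonempty W hY) (SS_lb hρ hph hW hW0 hY)
  · -- value at X
    have h1 : sInf (SS P W X) ≤ ρ X := by
      apply csInf_le (SS_bddBelow hρ hph hW hW0 hX)
      exact ⟨1, zero_le_one, ae_of_all _ fun ω => by simp [hWdef]⟩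
    have h2 : ρ X ≤ sInf (SS P W X) :=
      le_csInf (SS_nonempty W hX) (SS_lb hρ hph hW hW0 hX)
    linarith
  constructor
  constructor
  · -- monotone
    intro X' Y' hX' hY' hle
    refine csInf_le_csInf (SS_bddBelow hρ hph hW hW0 hY') (SS_nonempty W hX') ?_
    rintro m ⟨l, hl, hae⟩
    refine ⟨l, hl, ?_⟩
    filter_upwards [hae, hle] with ω h1 h2
    linarith
  · -- cash invariance
    intro Y hY c
    have hYc : MemLinf P fun ω => Y ω + c := memLinf_add_const hY c
    apply le_antisymm
    · apply le_of_forall_pos_le_add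
      intro ε hε
      obtain ⟨m, ⟨l, hl, hae⟩, hmlt⟩ := Real.lt_sInf_add_pos (SS_nonempty W hY) hε
      have hmem : m - c ∈ SS P W (fun ω => Y ω + c) := by
        refine ⟨l, hl, ?_⟩
        filter_upwards [hae] with ω h1
        linarith
      have h2 := csInf_le (SS_bddBelow hρ hph hW hW0 hYc) hmem
      linarith
    · refine le_csInf (SS_nonempty W hYc) ?_
      rintro m ⟨l, hl, hae⟩
      have hmem : m + c ∈ SS P W Y := by
        refine ⟨l, hl, ?_⟩
        filter_upwards [hae] with ω h1
        linarith
      have h2 := csInf_le (SS_bddBelow hρ hph hW hW0 hY) hmem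
      linarith
  constructor
  · -- convexity
    intro Y Z hY hZ α hα hα1
    have hM : MemLinf P fun ω => α * Y ω + (1 - α) * Z ω :=
      memLinf_add (memLinf_const_mul hY α) (memLinf_const_mul hZ (1 - α))
    apply le_of_forall_pos_le_add
    intro ε hε
    obtain ⟨m, ⟨l₁, hl₁, hae₁⟩, hmlt⟩ :=
      Real.lt_sInf_add_pos (SS_nonempty W hY) (half_pos hε)
    obtain ⟨n, ⟨l₂, hl₂, hae₂⟩, hnlt⟩ :=
      Real.lt_sInf_add_pos (SS_nonempty W hZ) (half_pos hε)
    have h1α : (0:ℝ) ≤ 1 - α := by linarith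
    have hmem : α * m + (1 - α) * n ∈ SS P W (fun ω => α * Y ω + (1 - α) * Z ω) := by
      refine ⟨α * l₁ + (1 - α) * l₂, by positivity, ?_⟩
      filter_upwards [hae₁, hae₂] with ω h1 h2
      nlinarith [mul_le_mul_of_nonneg_left h1 hα, mul_le_mul_of_nonneg_left h2 h1α]
    have h2 := csInf_le (SS_bddBelow hρ hph hW hW0 hM) hmem
    nlinarith [mul_le_mul_of_nonneg_left hmlt.le hα, mul_le_mul_of_nonneg_left hnlt.le h1α]
  · -- positive homogeneity
    intro Y hY α hα
    have hYα : MemLinf P fun ω => α * Y ω := memLinf_const_mul hY α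
    rcases eq_or_lt_of_le hα with hα0 | hαpos
    · -- α = 0
      subst hα0
      have hle0 : sInf (SS P W fun ω => (0:ℝ) * Y ω) ≤ 0 := by
        apply csInf_le (SS_bddBelow hρ hph hW hW0 hYα)
        exact ⟨0, le_refl _, ae_of_all _ fun ω => by simp⟩
      have hb := le_csInf (SS_nonempty W hYα) (SS_lb hρ hph hW hW0 hYα)
      have hz : ρ (fun ω => (0:ℝ) * Y ω) = 0 := by
        rw [hph Y hY 0 (le_refl _)]; ring
      rw [hz] at hb
      show sInf (SS P W fun ω => (0:ℝ) * Y ω) = 0 * sInf (SS P W Y)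
      rw [show sInf (SS P W fun ω => (0:ℝ) * Y ω) = 0 from le_antisymm hle0 hb]
      ring
    · apply le_antisymm
      · apply le_of_forall_pos_le_add
        intro ε hε
        obtain ⟨m, ⟨l, hl, hae⟩, hmlt⟩ :=
          Real.lt_sInf_add_pos (SS_nonempty W hY) (div_pos hε hαpos)
        have hmem : α * m ∈ SS P W (fun ω => α * Y ω) := by
          refine ⟨α * l, by positivity, ?_⟩
          filter_upwards [hae] with ω h1
          nlinarith [mul_le_mul_of_nonneg_left h1 hα]
        have h2 := csInf_le (SS_bddBelow hρ hph hW hW0 hYα) hmem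
        have h3 : α * m < α * (sInf (SS P W Y) + ε / α) :=
          mul_lt_mul_of_pos_left hmlt hαpos
        rw [mul_add, mul_div_cancel₀ _ (ne_of_gt hαpos)] at h3
        linarith
      · apply le_of_forall_pos_le_add
        intro ε hε
        obtain ⟨t, ⟨l, hl, hae⟩, htlt⟩ :=
          Real.lt_sInf_add_pos (SS_nonempty W hYα) hε
        have hmem : t / α ∈ SS P W Y := by
          refine ⟨l / α, by positivity, ?_⟩
          filter_upwards [hae] with ω h1
          have hαne : α ≠ 0 := ne_of_gt hαpos
          have h2 : l * W ω / α ≤ (α * Y ω + t) / α :=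
            div_le_div_of_nonneg_right h1 hα
          have e : (α * Y ω + t) / α = Y ω + t / α := by
            rw [add_div, mul_div_cancel_left₀ _ hαne]
          rw [div_mul_eq_mul_div, ← e]
          exact h2
        have h2 := csInf_le (SS_bddBelow hρ hph hW hW0 hY) hmem
        have h3 : α * sInf (SS P W Y) ≤ α * (t / α) :=
          mul_le_mul_of_nonneg_left h2 hα
        rw [mul_div_cancel₀ _ (ne_of_gt hαpos)] at h3
        linarith

end Aux

section GLBAux

lemma isGLB_nonempty_of_real {s : Set ℝ} {a : ℝ} (h : IsGLB s a) : s.Nonempty := by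
  by_contra hc
  rw [Set.not_nonempty_iff_eq_empty] at hc
  subst hc
  have := h.2 (by simp : (a + 1) ∈ lowerBounds (∅ : Set ℝ))
  linarith

lemma isGLB_image_sub {s : Set ℝ} {a m : ℝ} (h : IsGLB s a) :
    IsGLB ((fun r => r - m) '' s) (a - m) := by
  constructor
  · rintro _ ⟨r, hr, rfl⟩
    have := h.1 hr
    simp only; linarith
  · intro b hb
    have hb' : b + m ∈ lowerBounds s := by
      intro r hr
      have := hb ⟨r, hr, rfl⟩
      simp only at this; linarith
    have := h.2 hb'
    linarith

lemma isGLB_image_mul {s : Set ℝ} {a α : ℝ} (hα : 0 < α) (h : IsGLB s a) :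
    IsGLB ((fun r => α * r) '' s) (α * a) := by
  constructor
  · rintro _ ⟨r, hr, rfl⟩
    exact mul_le_mul_of_nonneg_left (h.1 hr) hα.le
  · intro b hb
    have hb' : b / α ∈ lowerBounds s := by
      intro r hr
      have h1 := hb ⟨r, hr, rfl⟩
      simp only at h1
      rw [div_le_iff₀ hα]
      linarith [h1, mul_comm α r]
    have h2 := (div_le_iff₀ hα).mp (h.2 hb')
    linarith [mul_comm α a, h2]

end GLBAux

/-- `ρ` is a positively homogeneous monetary risk measure if and only if, for every
`X ∈ L^∞(P)`, `ρ(X)` is the infimum of `h(X)` over coherent risk measures `h ≥ ρ`. -/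
theorem stmt8 {Ω : Type*} [MeasurableSpace Ω] (P : Measure Ω) [IsProbabilityMeasure P]
    (ρ : (Ω → ℝ) → ℝ) :
    (IsMonetaryRM P ρ ∧ IsPosHom P ρ) ↔
      ∀ X : Ω → ℝ, MemLinf P X →
        IsGLB {r : ℝ | ∃ h : (Ω → ℝ) → ℝ, IsCoherentRM P h ∧
          (∀ Y : Ω → ℝ, MemLinf P Y → ρ Y ≤ h Y) ∧ r = h X} (ρ X) := by
  constructor
  · rintro ⟨hρ, hph⟩ X hX
    obtain ⟨h, hcoh, hge, hXeq⟩ := exists_coherent hρ hph hX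
    constructor
    · rintro r ⟨g, hg, hgge, rfl⟩
      exact hgge X hX
    · intro b hb
      exact hb ⟨h, hcoh, hge, hXeq.symm⟩
  · intro hyp
    refine ⟨⟨?_, ?_⟩, ?_⟩
    · -- monotone
      intro X Y hX hY hle
      refine (hyp X hX).2 ?_
      rintro r ⟨g, hg, hgge, rfl⟩
      exact (hgge Y hY).trans (hg.1.1 X Y hX hY hle)
    · -- cash invariance
      intro X hX m
      have h1 := hyp X hX
      have h2 := hyp (fun ω => X ω + m) (memLinf_add_const hX m)
      have hsets : {r : ℝ | ∃ h : (Ω → ℝ) → ℝ, IsCoherentRM P h ∧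
            (∀ Y : Ω → ℝ, MemLinf P Y → ρ Y ≤ h Y) ∧ r = h (fun ω => X ω + m)} =
          (fun r => r - m) '' {r : ℝ | ∃ h : (Ω → ℝ) → ℝ, IsCoherentRM P h ∧
            (∀ Y : Ω → ℝ, MemLinf P Y → ρ Y ≤ h Y) ∧ r = h X} := by
        ext r
        simp only [Set.mem_setOf_eq, Set.mem_image]
        constructor
        · rintro ⟨g, hg, hgge, rfl⟩
          exact ⟨g X, ⟨g, hg, hgge, rfl⟩, by rw [hg.1.2 X hX m]⟩
        · rintro ⟨s, ⟨g, hg, hgge, rfl⟩, rfl⟩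
          exact ⟨g, hg, hgge, (hg.1.2 X hX m).symm⟩
      rw [hsets] at h2
      exact h2.unique (isGLB_image_sub h1)
    · -- positive homogeneity
      intro X hX α hα
      have h1 := hyp X hX
      have h2 := hyp (fun ω => α * X ω) (memLinf_const_mul hX α)
      rcases eq_or_lt_of_le hα with hα0 | hαpos
      · subst hα0
        obtain ⟨r0, g0, hg0, hgge0, hr0⟩ := isGLB_nonempty_of_real h1
        have hsets : {r : ℝ | ∃ h : (Ω → ℝ) → ℝ, IsCoherentRM P h ∧
              (∀ Y : Ω → ℝ, MemLinf P Y → ρ Y ≤ h Y) ∧ r = h (fun ω => 0 * X ω)} =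
            {(0 : ℝ)} := by
          ext r
          simp only [Set.mem_setOf_eq, Set.mem_singleton_iff]
          constructor
          · rintro ⟨g, hg, hgge, rfl⟩
            rw [hg.2.2 X hX 0 le_rfl]; ring
          · rintro rfl
            exact ⟨g0, hg0, hgge0, by rw [hg0.2.2 X hX 0 le_rfl]; ring⟩
        rw [hsets] at h2
        have := h2.unique isGLB_singleton
        rw [this]; ring
      · have hsets : {r : ℝ | ∃ h : (Ω → ℝ) → ℝ, IsCoherentRM P h ∧
              (∀ Y : Ω → ℝ, MemLinf P Y → ρ Y ≤ h Y) ∧ r = h (fun ω => α * X ω)} =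
            (fun r => α * r) '' {r : ℝ | ∃ h : (Ω → ℝ) → ℝ, IsCoherentRM P h ∧
              (∀ Y : Ω → ℝ, MemLinf P Y → ρ Y ≤ h Y) ∧ r = h X} := by
          ext r
          simp only [Set.mem_setOf_eq, Set.mem_image]
          constructor
          · rintro ⟨g, hg, hgge, rfl⟩
            exact ⟨g X, ⟨g, hg, hgge, rfl⟩, (hg.2.2 X hX α hα).symm⟩
          · rintro ⟨s, ⟨g, hg, hgge, rfl⟩, rfl⟩
            exact ⟨g, hg, hgge, (hg.2.2 X hX α hα).symm⟩
        rw [hsets] at h2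
        exact h2.unique (isGLB_image_mul hαpos h1)
end

section
/- Suppose (Ω, ℱ, P) is nonatomic and ρ is a law-invariant monetary risk measure on L^∞(P) that is comonotonic convex (ρ(αX + (1−α)Y) ≤ αρ(X) + (1−α)ρ(Y) whenever X, Y are comonotonic and α ∈ [0,1]). Then the set of quantile functions 𝒬_ρ = {q_Z : Z ∈ 𝒜_ρ} is convex: for q₁, q₂ ∈ 𝒬_ρ and α ∈ [0,1], αq₁ + (1−α)q₂ is the quantile function of some element of 𝒜_ρ. -/
open MeasureTheory ProbabilityTheory Filter Set

/-- The upper quantile function `q_X(t) = inf {x : F_X(x) > t}` of `X` under `P`. -/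
noncomputable def uq {Ω : Type*} [MeasurableSpace Ω] (P : Measure Ω)
    (X : Ω → ℝ) (t : ℝ) : ℝ :=
  sInf {x : ℝ | t < cdf (P.map X) x}

/-- `X` and `Y` are comonotonic: on a set `Ω₀` of full measure,
`(X(ω) − X(ω'))(Y(ω) − Y(ω')) ≥ 0` for all `ω, ω' ∈ Ω₀`. -/
def Comonotonic {Ω : Type*} [MeasurableSpace Ω] (P : Measure Ω) (X Y : Ω → ℝ) : Prop :=
  ∃ Ω₀ : Set Ω, MeasurableSet Ω₀ ∧ P Ω₀ = 1 ∧
    ∀ ω ∈ Ω₀, ∀ ω' ∈ Ω₀, 0 ≤ (X ω - X ω') * (Y ω - Y ω')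


/-! The quantile function `q_μ` of any real law `μ` is monotone and right-continuous on `(0,1)`,
and for every monotone `g` right-continuous at `t ∈ (0,1)`, the law of `g(U)`, `U` uniform, has
quantile `g(t)` at `t`; taking `g = q_μ` recovers `μ` itself. So with `Qᵢ` monotone extensions of
`q_{Zᵢ}`, the comonotonic pair `Qᵢ(U)` has the laws of `Zᵢ`, hence the same risk by law
invariance, and their mixture `α Q₁(U) + (1-α) Q₂(U)` has quantile `α q_{Z₁} + (1-α) q_{Z₂}` and
risk `≤ α ρ(Z₁) + (1-α) ρ(Z₂) ≤ 0` by comonotonic convexity. -/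

-- For `t ≥ 1` the set is empty and for `t < 0` it is all of `ℝ`: there `sInf` gives the junk `0`.
noncomputable def upperQuantile (μ : Measure ℝ) (t : ℝ) : ℝ :=
  sInf {x : ℝ | t < cdf μ x}

section UpperQuantile

variable {μ : Measure ℝ} {t x : ℝ}

lemma bddBelow_setOf_lt_cdf (ht : 0 < t) : BddBelow {x : ℝ | t < cdf μ x} := by
  obtain ⟨a, ha⟩ := eventually_atBot.1 ((tendsto_cdf_atBot μ).eventually (gt_mem_nhds ht))
  exact ⟨a, fun x hx => le_of_not_gt fun hxa => lt_asymm hx (ha x hxa.le)⟩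

lemma nonempty_setOf_lt_cdf (ht : t < 1) : {x : ℝ | t < cdf μ x}.Nonempty :=
  ((tendsto_cdf_atTop μ).eventually (lt_mem_nhds ht)).exists

lemma upperQuantile_le_of_lt_cdf (ht : 0 < t) (h : t < cdf μ x) : upperQuantile μ t ≤ x :=
  csInf_le (bddBelow_setOf_lt_cdf ht) h

lemma lt_cdf_of_upperQuantile_lt (ht : t < 1) (h : upperQuantile μ t < x) : t < cdf μ x := by
  obtain ⟨y, hy, hyx⟩ := exists_lt_of_csInf_lt (nonempty_setOf_lt_cdf ht) h
  exact hy.trans_le (monotone_cdf μ hyx.le)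

lemma le_cdf_of_upperQuantile_le (ht : t < 1) (h : upperQuantile μ t ≤ x) : t ≤ cdf μ x :=
  ge_of_tendsto ((cdf μ).right_continuous x |>.mono Ioi_subset_Ici_self)
    (eventually_nhdsWithin_of_forall fun _ hy => (lt_cdf_of_upperQuantile_lt ht (h.trans_lt hy)).le)

lemma monotoneOn_upperQuantile : MonotoneOn (upperQuantile μ) (Ioo 0 1) :=
  fun _ ht _ hs hts => le_csInf (nonempty_setOf_lt_cdf hs.2)
    fun _ hx => upperQuantile_le_of_lt_cdf ht.1 (hts.trans_lt hx)

lemma continuousWithinAt_upperQuantile (ht : t ∈ Ioo 0 1) :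
    ContinuousWithinAt (upperQuantile μ) (Ioi t) t := by
  refine tendsto_order.2 ⟨fun b hb => ?_, fun b hb => ?_⟩
  · filter_upwards [Ioo_mem_nhdsGT ht.2] with s hs
    exact hb.trans_le (monotoneOn_upperQuantile ht ⟨ht.1.trans hs.1, hs.2⟩ hs.1.le)
  · obtain ⟨c, hqc, hcb⟩ := exists_between hb
    filter_upwards [Ioo_mem_nhdsGT (lt_cdf_of_upperQuantile_lt ht.2 hqc)] with s hs
    exact (upperQuantile_le_of_lt_cdf (ht.1.trans hs.1) hs.2).trans_lt hcb

lemma upperQuantile_mem_Icc [IsProbabilityMeasure μ] {a b : ℝ} (hμ : ∀ᵐ x ∂μ, x ∈ Icc a b)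
    (ht : t ∈ Ioo 0 1) :
    upperQuantile μ t ∈ Icc a b := by
  refine ⟨le_csInf (nonempty_setOf_lt_cdf ht.2) fun x hx => le_of_not_gt fun hxa => ?_,
    upperQuantile_le_of_lt_cdf ht.1 (ht.2.trans_le ?_)⟩
  · have hnull : μ (Iic x) = 0 :=
      measure_eq_zero_iff_ae_notMem.2 (hμ.mono fun y hy hyx => (hxa.trans_le hy.1).not_ge hyx)
    have hcdf : cdf μ x = 0 := by rw [cdf_eq_real, measureReal_def, hnull, ENNReal.toReal_zero]
    exact (ht.1.trans (hcdf ▸ hx)).false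
  · have hfull : μ (Iic b) = 1 := by
      rw [← measure_univ (μ := μ)]
      exact (ae_mem_iff_measure_eq measurableSet_Iic.nullMeasurableSet).1 (hμ.mono fun y hy => hy.2)
    rw [cdf_eq_real, measureReal_def, hfull, ENNReal.toReal_one]

lemma continuousWithinAt_of_eqOn_upperQuantile {Q : ℝ → ℝ}
    (hQ : EqOn Q (upperQuantile μ) (Ioo 0 1)) (ht : t ∈ Ioo 0 1) :
    ContinuousWithinAt Q (Ioi t) t :=
  (continuousWithinAt_upperQuantile ht).congr_of_eventuallyEq
    (eventually_nhdsWithin_of_eventually_nhds (hQ.eventuallyEq_of_mem (Ioo_mem_nhds ht.1 ht.2)))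
    (hQ ht)

end UpperQuantile

lemma MonotoneOn.exists_monotone_extension_Ioo {g : ℝ → ℝ} {a b c d : ℝ}
    (hg : MonotoneOn g (Ioo c d)) (hgab : MapsTo g (Ioo c d) (Icc a b)) (hcd : c < d) :
    ∃ Q : ℝ → ℝ, Monotone Q ∧ (∀ s, Q s ∈ Icc a b) ∧ EqOn Q g (Ioo c d) := by
  obtain ⟨m, hm⟩ := exists_between hcd
  have hab : a ≤ b := (hgab hm).1.trans (hgab hm).2
  set Q : ℝ → ℝ := fun s => if s ≤ c then a else if s < d then g s else b
  have hQab : ∀ s, Q s ∈ Icc a b := fun s => by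
    simp only [Q]
    split_ifs with h₁ h₂
    exacts [⟨le_rfl, hab⟩, hgab ⟨not_le.1 h₁, h₂⟩, ⟨hab, le_rfl⟩]
  refine ⟨Q, fun s s' hss' => ?_, hQab, fun s hs => (if_neg hs.1.not_ge).trans (if_pos hs.2)⟩
  by_cases hs : s ≤ c
  · simpa only [Q, if_pos hs] using (hQab s').1
  by_cases hs' : d ≤ s'
  · simpa only [Q, if_neg (not_le.2 (hcd.trans_le hs')), if_neg (not_lt.2 hs')] using (hQab s).2
  have hsI : s ∈ Ioo c d := ⟨not_le.1 hs, hss'.trans_lt (not_le.1 hs')⟩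
  have hs'I : s' ∈ Ioo c d := ⟨hsI.1.trans_le hss', not_le.1 hs'⟩
  simpa only [Q, if_neg hsI.1.not_ge, if_pos hsI.2, if_neg hs'I.1.not_ge, if_pos hs'I.2]
    using hg hsI hs'I hss'

instance : IsProbabilityMeasure (volume.restrict (Ioo (0 : ℝ) 1)) := ⟨by simp⟩

lemma volume_inter_Ioo_ne_top (s : Set ℝ) : volume (s ∩ Ioo (0 : ℝ) 1) ≠ ⊤ :=
  ((measure_mono inter_subset_right).trans_lt measure_Ioo_lt_top).ne

lemma cdf_map_volume_Ioo {g : ℝ → ℝ} (hg : Monotone g) (x : ℝ) :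
    cdf ((volume.restrict (Ioo (0 : ℝ) 1)).map g) x = volume.real ({s | g s ≤ x} ∩ Ioo 0 1) := by
  have := Measure.isProbabilityMeasure_map
    (μ := volume.restrict (Ioo (0 : ℝ) 1)) hg.measurable.aemeasurable
  rw [cdf_eq_real, map_measureReal_apply hg.measurable measurableSet_Iic,
    measureReal_restrict_apply (hg.measurable measurableSet_Iic)]
  rfl

lemma upperQuantile_map_volume_Ioo {g : ℝ → ℝ} (hg : Monotone g) {t : ℝ} (ht : t ∈ Ioo 0 1)
    (hgt : ContinuousWithinAt g (Ioi t) t) :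
    upperQuantile ((volume.restrict (Ioo (0 : ℝ) 1)).map g) t = g t := by
  refine le_antisymm (ge_of_tendsto hgt ?_) (le_csInf (nonempty_setOf_lt_cdf ht.2) fun x hx => ?_)
  · filter_upwards [Ioo_mem_nhdsGT ht.2] with s hs
    refine upperQuantile_le_of_lt_cdf ht.1 (hs.1.trans_le ?_)
    calc s = volume.real (Ioc 0 s) := by
          rw [Real.volume_real_Ioc_of_le (ht.1.trans hs.1).le, sub_zero]
      _ ≤ volume.real ({r | g r ≤ g s} ∩ Ioo 0 1) :=
          measureReal_mono (fun r hr => ⟨hg hr.2, hr.1, hr.2.trans_lt hs.2⟩)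
            (volume_inter_Ioo_ne_top _)
      _ = cdf _ (g s) := (cdf_map_volume_Ioo hg _).symm
  · refine le_of_not_gt fun hxg => (show t < cdf _ x from hx).not_ge ?_
    calc cdf _ x = volume.real ({s | g s ≤ x} ∩ Ioo 0 1) := cdf_map_volume_Ioo hg x
      _ ≤ volume.real (Ioc 0 t) := measureReal_mono (fun r hr =>
          ⟨hr.2.1, le_of_not_gt fun htr => (hxg.trans_le (hg htr.le)).not_ge hr.1⟩)
          measure_Ioc_lt_top.ne
      _ = t := by rw [Real.volume_real_Ioc_of_le ht.1.le, sub_zero]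

lemma map_volume_Ioo_eq_of_eqOn_upperQuantile {μ : Measure ℝ} [IsProbabilityMeasure μ]
    {Q : ℝ → ℝ} (hQ : Monotone Q) (hQμ : EqOn Q (upperQuantile μ) (Ioo 0 1)) :
    (volume.restrict (Ioo (0 : ℝ) 1)).map Q = μ := by
  have := Measure.isProbabilityMeasure_map
    (μ := volume.restrict (Ioo (0 : ℝ) 1)) hQ.measurable.aemeasurable
  refine Measure.eq_of_cdf _ _ (StieltjesFunction.ext fun x => ?_)
  have hF0 := cdf_nonneg μ x
  have hF1 := cdf_le_one μ x
  rw [cdf_map_volume_Ioo hQ]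
  refine le_antisymm ?_ ?_
  · calc volume.real ({s | Q s ≤ x} ∩ Ioo 0 1) ≤ volume.real (Ioc 0 (cdf μ x)) :=
          measureReal_mono (fun s hs =>
            ⟨hs.2.1, le_cdf_of_upperQuantile_le hs.2.2 (hQμ hs.2 ▸ hs.1)⟩) measure_Ioc_lt_top.ne
      _ = cdf μ x := by rw [Real.volume_real_Ioc_of_le hF0, sub_zero]
  · calc cdf μ x = volume.real (Ioo 0 (cdf μ x)) := by
          rw [Real.volume_real_Ioo_of_le hF0, sub_zero]
      _ ≤ volume.real ({s | Q s ≤ x} ∩ Ioo 0 1) := measureReal_mono (fun s hs =>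
          have hs1 : s ∈ Ioo 0 1 := ⟨hs.1, hs.2.trans_le hF1⟩
          ⟨(hQμ hs1).trans_le (upperQuantile_le_of_lt_cdf hs.1 hs.2), hs1⟩)
          (volume_inter_Ioo_ne_top _)

section RandomVariables

variable {Ω : Type*} [MeasurableSpace Ω]

lemma uq_eq_upperQuantile (P : Measure Ω) (X : Ω → ℝ) : uq P X = upperQuantile (P.map X) := rfl

lemma memLinf_of_mem_Icc (P : Measure Ω) {X : Ω → ℝ} {C : ℝ} (hX : Measurable X)
    (hXC : ∀ ω, X ω ∈ Icc (-C) C) : MemLinf P X :=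
  ⟨hX, C, ae_of_all _ fun ω => abs_le.2 (hXC ω)⟩

lemma comonotonic_comp_of_monotone (P : Measure Ω) [IsProbabilityMeasure P] {β : Type*}
    [LinearOrder β] {f g : β → ℝ} (hf : Monotone f) (hg : Monotone g) (U : Ω → β) :
    Comonotonic P (f ∘ U) (g ∘ U) := by
  refine ⟨univ, MeasurableSet.univ, measure_univ, fun ω _ ω' _ => ?_⟩
  rcases le_total (U ω') (U ω) with h | h
  · exact mul_nonneg (sub_nonneg.2 (hf h)) (sub_nonneg.2 (hg h))
  · exact mul_nonneg_of_nonpos_of_nonpos (sub_nonpos.2 (hf h)) (sub_nonpos.2 (hg h))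

lemma exists_monotone_eqOn_uq_map_comp_eq (P : Measure Ω) [IsProbabilityMeasure P] {U : Ω → ℝ}
    (hU : Measurable U) (hUd : P.map U = volume.restrict (Ioo (0 : ℝ) 1)) {Z : Ω → ℝ} {C : ℝ}
    (hZ : Measurable Z) (hZC : ∀ᵐ ω ∂P, |Z ω| ≤ C) :
    ∃ Q : ℝ → ℝ, Monotone Q ∧ (∀ s, Q s ∈ Icc (-C) C) ∧ EqOn Q (uq P Z) (Ioo 0 1) ∧
      P.map (Q ∘ U) = P.map Z := by
  have := Measure.isProbabilityMeasure_map (μ := P) hZ.aemeasurable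
  have hlaw : ∀ᵐ x ∂P.map Z, x ∈ Icc (-C) C :=
    (ae_map_iff hZ.aemeasurable measurableSet_Icc).2 (hZC.mono fun _ h => abs_le.1 h)
  obtain ⟨Q, hQ, hQC, hQZ⟩ := monotoneOn_upperQuantile.exists_monotone_extension_Ioo
    (fun t ht => upperQuantile_mem_Icc hlaw ht) zero_lt_one
  refine ⟨Q, hQ, hQC, hQZ, ?_⟩
  rw [← Measure.map_map hQ.measurable hU, hUd, map_volume_Ioo_eq_of_eqOn_upperQuantile hQ hQZ]

end RandomVariables

theorem stmt19_general {Ω : Type*} [MeasurableSpace Ω] (P : Measure Ω) [IsProbabilityMeasure P]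
    (U : Ω → ℝ) (hU : Measurable U)
    (hUd : P.map U = volume.restrict (Ioo (0 : ℝ) 1))
    (ρ : (Ω → ℝ) → ℝ)
    (hLI : ∀ X Y : Ω → ℝ, MemLinf P X → MemLinf P Y → P.map X = P.map Y → ρ X = ρ Y)
    (hCoMcv : ∀ X Y : Ω → ℝ, MemLinf P X → MemLinf P Y → Comonotonic P X Y →
      ∀ α : ℝ, 0 ≤ α → α ≤ 1 →
        ρ (fun ω => α * X ω + (1 - α) * Y ω) ≤ α * ρ X + (1 - α) * ρ Y)
    (Z₁ Z₂ : Ω → ℝ) (hZ₁ : MemLinf P Z₁) (hZ₂ : MemLinf P Z₂)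
    (hZ₁A : ρ Z₁ ≤ 0) (hZ₂A : ρ Z₂ ≤ 0)
    (α : ℝ) (hα0 : 0 ≤ α) (hα1 : α ≤ 1) :
    ∃ W : Ω → ℝ, MemLinf P W ∧ ρ W ≤ 0 ∧
      ∀ t ∈ Ioo (0 : ℝ) 1, uq P W t = α * uq P Z₁ t + (1 - α) * uq P Z₂ t := by
  obtain ⟨hZ₁m, C₁, hC₁⟩ := hZ₁
  obtain ⟨hZ₂m, C₂, hC₂⟩ := hZ₂
  set C := max C₁ C₂
  obtain ⟨Q₁, hQ₁, hQ₁C, hQ₁Z, hlaw₁⟩ := exists_monotone_eqOn_uq_map_comp_eq P hU hUd hZ₁m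
    (hC₁.mono fun _ h => h.trans (le_max_left C₁ C₂))
  obtain ⟨Q₂, hQ₂, hQ₂C, hQ₂Z, hlaw₂⟩ := exists_monotone_eqOn_uq_map_comp_eq P hU hUd hZ₂m
    (hC₂.mono fun _ h => h.trans (le_max_right C₁ C₂))
  have hX₁ := memLinf_of_mem_Icc P (hQ₁.measurable.comp hU) fun _ => hQ₁C _
  have hX₂ := memLinf_of_mem_Icc P (hQ₂.measurable.comp hU) fun _ => hQ₂C _
  set g := fun s => α * Q₁ s + (1 - α) * Q₂ s
  have hg : Monotone g := (hQ₁.const_mul hα0).add (hQ₂.const_mul (sub_nonneg.2 hα1))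
  refine ⟨g ∘ U, memLinf_of_mem_Icc P (hg.measurable.comp hU) fun ω =>
    convex_Icc (-C) C (hQ₁C _) (hQ₂C _) hα0 (sub_nonneg.2 hα1) (add_sub_cancel _ _), ?_,
    fun t ht => ?_⟩
  · calc ρ (g ∘ U) ≤ α * ρ (Q₁ ∘ U) + (1 - α) * ρ (Q₂ ∘ U) :=
          hCoMcv _ _ hX₁ hX₂ (comonotonic_comp_of_monotone P hQ₁ hQ₂ U) α hα0 hα1
      _ ≤ 0 := by
          rw [hLI _ _ hX₁ ⟨hZ₁m, C₁, hC₁⟩ hlaw₁, hLI _ _ hX₂ ⟨hZ₂m, C₂, hC₂⟩ hlaw₂]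
          exact add_nonpos (mul_nonpos_of_nonneg_of_nonpos hα0 hZ₁A)
            (mul_nonpos_of_nonneg_of_nonpos (sub_nonneg.2 hα1) hZ₂A)
  · have hgt : ContinuousWithinAt g (Ioi t) t :=
      ((continuousWithinAt_of_eqOn_upperQuantile hQ₁Z ht).const_mul α).add
        ((continuousWithinAt_of_eqOn_upperQuantile hQ₂Z ht).const_mul (1 - α))
    rw [← hQ₁Z ht, ← hQ₂Z ht, uq_eq_upperQuantile, ← Measure.map_map hg.measurable hU, hUd,
      upperQuantile_map_volume_Ioo hg ht hgt]

/-- For a law-invariant comonotonic-convex monetary risk measure `ρ` on a nonatomic space,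
the set of quantile functions of elements of `𝒜_ρ` is convex: for `Z₁, Z₂ ∈ 𝒜_ρ` and
`α ∈ [0,1]`, `α q_{Z₁} + (1−α) q_{Z₂}` is the quantile function of some element of `𝒜_ρ`. -/
theorem stmt19 {Ω : Type*} [MeasurableSpace Ω] (P : Measure Ω) [IsProbabilityMeasure P]
    (U : Ω → ℝ) (hU : Measurable U)
    (hUd : P.map U = volume.restrict (Ioo (0 : ℝ) 1))
    (ρ : (Ω → ℝ) → ℝ)
    (hmono : ∀ X Y : Ω → ℝ, MemLinf P X → MemLinf P Y →
      (∀ᵐ ω ∂P, X ω ≤ Y ω) → ρ Y ≤ ρ X)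
    (hTI : ∀ X : Ω → ℝ, MemLinf P X → ∀ m : ℝ, ρ (fun ω => X ω + m) = ρ X - m)
    (hLI : ∀ X Y : Ω → ℝ, MemLinf P X → MemLinf P Y → P.map X = P.map Y → ρ X = ρ Y)
    (hCoMcv : ∀ X Y : Ω → ℝ, MemLinf P X → MemLinf P Y → Comonotonic P X Y →
      ∀ α : ℝ, 0 ≤ α → α ≤ 1 →
        ρ (fun ω => α * X ω + (1 - α) * Y ω) ≤ α * ρ X + (1 - α) * ρ Y)
    (Z₁ Z₂ : Ω → ℝ) (hZ₁ : MemLinf P Z₁) (hZ₂ : MemLinf P Z₂)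
    (hZ₁A : ρ Z₁ ≤ 0) (hZ₂A : ρ Z₂ ≤ 0)
    (α : ℝ) (hα0 : 0 ≤ α) (hα1 : α ≤ 1) :
    ∃ W : Ω → ℝ, MemLinf P W ∧ ρ W ≤ 0 ∧
      ∀ t ∈ Ioo (0 : ℝ) 1, uq P W t = α * uq P Z₁ t + (1 - α) * uq P Z₂ t :=
  stmt19_general P U hU hUd ρ hLI hCoMcv Z₁ Z₂ hZ₁ hZ₂ hZ₁A hZ₂A α hα0 hα1
end
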